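/- Let R be an n × n^{m−1} column-stochastic matrix, v stochastic, α < 1/(m−1), and x the unique stochastic multilinear PageRank solution. Suppose the sequence x^{(k)} of stochastic vectors satisfies the inner-outer recurrence x^{(k+1)} = (α/(m−1)) R̄ (x^{(k+1)} ⊗ ⋯ ⊗ x^{(k+1)}) + (1 − α/(m−1)) x^{(k)}, where R̄ = αR + (1−α)v eᵀ. Then ‖x^{(k)} − x‖₁ ≤ ((1 − α/(m−1))/(1 − α²))^k ‖x^{(0)} − x‖₁, and the rate (1 − α/(m−1))/(1 − α²) < 1. -/

import Mathlib

open Finset Matrix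

def StochVec {α : Type*} [Fintype α] (x : α → ℝ) : Prop :=
  (∀ i, 0 ≤ x i) ∧ ∑ i, x i = 1

def norm1 {α : Type*} [Fintype α] (x : α → ℝ) : ℝ := ∑ i, |x i|

def kron {α β : Type*} (a : α → ℝ) (b : β → ℝ) : α × β → ℝ := fun p => a p.1 * b p.2

def kpow {n : ℕ} (x : Fin n → ℝ) (k : ℕ) : (Fin k → Fin n) → ℝ := fun f => ∏ i, x (f i)

def ColStoch {α β : Type*} [Fintype α] (R : Matrix α β ℝ) : Prop :=
  (∀ i j, 0 ≤ R i j) ∧ ∀ j, ∑ i, R i j = 1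

/-
Write β = α/(m-1) and e_k = X_k - x. Since x = R̄ x^{⊗(m-1)}, the recurrence gives
e_{k+1} = β (R̄ X_{k+1}^{⊗(m-1)} - R̄ x^{⊗(m-1)}) + (1 - β) e_k. On stochastic vectors the
rank-one part (1-α) v eᵀ of R̄ cancels in this difference, R does not increase the 1-norm, and
y ↦ y^{⊗(m-1)} is (m-1)-Lipschitz in the 1-norm, so
‖e_{k+1}‖ ≤ β α (m-1) ‖e_{k+1}‖ + (1-β) ‖e_k‖ = α² ‖e_{k+1}‖ + (1-β) ‖e_k‖.
The rate (1-β)/(1-α²) is below 1 exactly when α² < β, i.e. α (m-1) < 1.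
-/

section Norm1

variable {ι κ : Type*} [Fintype κ]

lemma mulVec_add_rankOne (a b : ℝ) (R : Matrix ι κ ℝ) (v : ι → ℝ) (p : κ → ℝ) :
    ((fun i j => a * R i j + b * v i : Matrix ι κ ℝ)) *ᵥ p = a • R *ᵥ p + (b * ∑ j, p j) • v := by
  ext i
  simp only [mulVec, dotProduct, Pi.add_apply, Pi.smul_apply, smul_eq_mul, mul_sum, sum_mul,
    ← sum_add_distrib]
  exact sum_congr rfl fun j _ => by ring

variable [Fintype ι]

lemma norm1_add_le (y z : ι → ℝ) : norm1 (y + z) ≤ norm1 y + norm1 z := by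
  rw [norm1, norm1, norm1, ← sum_add_distrib]
  exact sum_le_sum fun i _ => abs_add_le _ _

lemma norm1_smul (c : ℝ) (y : ι → ℝ) : norm1 (c • y) = |c| * norm1 y := by
  simp only [norm1, Pi.smul_apply, smul_eq_mul, abs_mul, mul_sum]

lemma ColStoch.norm1_mulVec_le {M : Matrix ι κ ℝ} (hM : ColStoch M) (w : κ → ℝ) :
    norm1 (M *ᵥ w) ≤ norm1 w :=
  calc norm1 (M *ᵥ w) ≤ ∑ i, ∑ j, M i j * |w j| :=
        sum_le_sum fun i _ => (abs_sum_le_sum_abs _ _).trans_eq <|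
          sum_congr rfl fun j _ => by rw [abs_mul, abs_of_nonneg (hM.1 i j)]
    _ = ∑ j, (∑ i, M i j) * |w j| := by rw [sum_comm]; simp only [sum_mul]
    _ = norm1 w := by simp only [hM.2, one_mul, norm1]

end Norm1

section TensorPower

lemma sum_fun_fin_succ {α M : Type*} [Fintype α] [AddCommMonoid M] {k : ℕ}
    (F : (Fin (k + 1) → α) → M) : ∑ f, F f = ∑ a, ∑ g : Fin k → α, F (Fin.cons a g) := by
  rw [← (Fin.consEquiv fun _ => α).sum_comp F, Fintype.sum_prod_type]
  rfl

variable {n : ℕ}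

lemma kpow_cons (y : Fin n → ℝ) {k : ℕ} (a : Fin n) (g : Fin k → Fin n) :
    kpow y (k + 1) (Fin.cons a g) = y a * kpow y k g := by
  simp only [kpow, Fin.prod_univ_succ, Fin.cons_zero, Fin.cons_succ]

lemma StochVec.kpow {y : Fin n → ℝ} (hy : StochVec y) (k : ℕ) : StochVec (kpow y k) :=
  ⟨fun f => prod_nonneg fun i _ => hy.1 (f i), by
    simp only [_root_.kpow, ← Fintype.sum_pow, hy.2, one_pow]⟩

lemma norm1_kpow_sub_le {y z : Fin n → ℝ} (hy : StochVec y) (hz : StochVec z) (k : ℕ) :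
    norm1 (kpow y k - kpow z k) ≤ k * norm1 (y - z) := by
  induction k with
  | zero => simp [norm1, kpow]
  | succ k ih =>
    have hterm : ∀ a g, |kpow y (k + 1) (Fin.cons a g) - kpow z (k + 1) (Fin.cons a g)|
        ≤ |y a - z a| * kpow y k g + z a * |kpow y k g - kpow z k g| := fun a g => by
      rw [kpow_cons, kpow_cons,
        show y a * kpow y k g - z a * kpow z k g
          = (y a - z a) * kpow y k g + z a * (kpow y k g - kpow z k g) by ring]
      refine (abs_add_le _ _).trans_eq ?_
      rw [abs_mul, abs_mul, abs_of_nonneg ((hy.kpow k).1 g), abs_of_nonneg (hz.1 a)]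
    calc norm1 (kpow y (k + 1) - kpow z (k + 1))
        ≤ ∑ a, ∑ g, (|y a - z a| * kpow y k g + z a * |kpow y k g - kpow z k g|) := by
          rw [norm1, sum_fun_fin_succ]
          exact sum_le_sum fun a _ => sum_le_sum fun g _ => hterm a g
      _ = norm1 (y - z) + norm1 (kpow y k - kpow z k) := by
          simp only [sum_add_distrib, ← mul_sum, ← sum_mul, (hy.kpow k).2, hz.2, mul_one, one_mul]
          rfl
      _ ≤ (k + 1 : ℕ) * norm1 (y - z) := by push_cast; linarith

lemma ColStoch.norm1_rankOne_mulVec_kpow_sub_le {k : ℕ} {R : Matrix (Fin n) (Fin k → Fin n) ℝ}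
    (hR : ColStoch R) {a : ℝ} (ha : 0 ≤ a) (b : ℝ) (v : Fin n → ℝ) {y z : Fin n → ℝ}
    (hy : StochVec y) (hz : StochVec z) :
    norm1 (((fun i j => a * R i j + b * v i : Matrix (Fin n) (Fin k → Fin n) ℝ)) *ᵥ kpow y k
      - ((fun i j => a * R i j + b * v i : Matrix (Fin n) (Fin k → Fin n) ℝ)) *ᵥ kpow z k)
      ≤ a * k * norm1 (y - z) := by
  rw [mulVec_add_rankOne, mulVec_add_rankOne, (hy.kpow k).2, (hz.kpow k).2,
    add_sub_add_right_eq_sub, ← smul_sub, ← mulVec_sub, norm1_smul, abs_of_nonneg ha, mul_assoc]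
  exact mul_le_mul_of_nonneg_left ((hR.norm1_mulVec_le _).trans (norm1_kpow_sub_le hy hz k)) ha

end TensorPower

lemma norm1_sub_le_of_implicit_step {ι : Type*} [Fintype ι] {β L : ℝ} {x y y' u : ι → ℝ}
    (hβ0 : 0 ≤ β) (hβ1 : β ≤ 1) (hβL : β * L < 1) (hy' : y' = β • u + (1 - β) • y)
    (hu : norm1 (u - x) ≤ L * norm1 (y' - x)) :
    norm1 (y' - x) ≤ (1 - β) / (1 - β * L) * norm1 (y - x) := by
  have hsplit : y' - x = β • (u - x) + (1 - β) • (y - x) := by rw [hy']; module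
  have hbound : norm1 (y' - x) ≤ β * (L * norm1 (y' - x)) + (1 - β) * norm1 (y - x) := by
    calc norm1 (y' - x) ≤ β * norm1 (u - x) + (1 - β) * norm1 (y - x) := by
          rw [hsplit]
          refine (norm1_add_le _ _).trans_eq ?_
          rw [norm1_smul, norm1_smul, abs_of_nonneg hβ0, abs_of_nonneg (sub_nonneg.2 hβ1)]
      _ ≤ β * (L * norm1 (y' - x)) + (1 - β) * norm1 (y - x) := by gcongr
  rw [div_mul_eq_mul_div, le_div_iff₀ (sub_pos.2 hβL)]
  linarith

theorem stmt10_general {n m : ℕ} (hm : 2 ≤ m)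
    (R : Matrix (Fin n) (Fin (m - 1) → Fin n) ℝ) (hR : ColStoch R)
    (v : Fin n → ℝ)
    (α : ℝ) (hα0 : 0 < α) (hα : α < 1 / ((m : ℝ) - 1))
    (x : Fin n → ℝ) (hx : StochVec x)
    (hxe : x = fun i => α * R.mulVec (kpow x (m - 1)) i + (1 - α) * v i)
    (Rbar : Matrix (Fin n) (Fin (m - 1) → Fin n) ℝ)
    (hRbar : Rbar = fun i j => α * R i j + (1 - α) * v i)
    (X : ℕ → (Fin n → ℝ)) (hXs : ∀ k, StochVec (X k))
    (hrec : ∀ k, X (k + 1) = fun i =>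
      (α / ((m : ℝ) - 1)) * Rbar.mulVec (kpow (X (k + 1)) (m - 1)) i
        + (1 - α / ((m : ℝ) - 1)) * X k i) :
    (∀ k, norm1 (X k - x) ≤ ((1 - α / ((m : ℝ) - 1)) / (1 - α ^ 2)) ^ k * norm1 (X 0 - x)) ∧
    (1 - α / ((m : ℝ) - 1)) / (1 - α ^ 2) < 1 := by
  have hm1 : ((m - 1 : ℕ) : ℝ) = (m : ℝ) - 1 := by
    rw [Nat.cast_sub (by omega), Nat.cast_one]
  have hmpos : (1 : ℝ) ≤ (m : ℝ) - 1 := by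
    rw [← hm1]; exact_mod_cast (by omega : 1 ≤ m - 1)
  have hαm : α * ((m : ℝ) - 1) < 1 := by rwa [lt_div_iff₀ (by linarith)] at hα
  have hβα : α / ((m : ℝ) - 1) * (α * ((m : ℝ) - 1)) = α ^ 2 := by field_simp
  have hβ0 : 0 < α / ((m : ℝ) - 1) := by positivity
  have hβ1 : α / ((m : ℝ) - 1) ≤ 1 := by rw [div_le_one (by linarith)]; nlinarith
  have hα2β : α ^ 2 < α / ((m : ℝ) - 1) := hβα ▸ mul_lt_of_lt_one_right hβ0 hαm
  have hα2 : α ^ 2 < 1 := hα2β.trans_le hβ1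
  have hfix : Rbar *ᵥ kpow x (m - 1) = x := by
    rw [hRbar, mulVec_add_rankOne, (hx.kpow _).2, mul_one]
    conv_rhs => rw [hxe]
    rfl
  have hstep : ∀ k, norm1 (X (k + 1) - x)
      ≤ (1 - α / ((m : ℝ) - 1)) / (1 - α ^ 2) * norm1 (X k - x) := fun k => by
    rw [← hβα]
    refine norm1_sub_le_of_implicit_step hβ0.le hβ1 (hβα ▸ hα2) ((hrec k).trans rfl) ?_
    conv_lhs => rw [← hfix, hRbar]
    rw [← hm1]
    exact hR.norm1_rankOne_mulVec_kpow_sub_le hα0.le _ _ (hXs (k + 1)) hx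
  refine ⟨fun k => le_geom (u := fun k => norm1 (X k - x)) (by positivity) k fun j _ => hstep j, ?_⟩
  rw [div_lt_one (by linarith)]
  linarith

theorem stmt10 {n m : ℕ} (hm : 2 ≤ m)
    (R : Matrix (Fin n) (Fin (m - 1) → Fin n) ℝ) (hR : ColStoch R)
    (v : Fin n → ℝ) (hv : StochVec v)
    (α : ℝ) (hα0 : 0 < α) (hα : α < 1 / ((m : ℝ) - 1))
    (x : Fin n → ℝ) (hx : StochVec x)
    (hxe : x = fun i => α * R.mulVec (kpow x (m - 1)) i + (1 - α) * v i)
    (Rbar : Matrix (Fin n) (Fin (m - 1) → Fin n) ℝ)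
    (hRbar : Rbar = fun i j => α * R i j + (1 - α) * v i)
    (X : ℕ → (Fin n → ℝ)) (hXs : ∀ k, StochVec (X k))
    (hrec : ∀ k, X (k + 1) = fun i =>
      (α / ((m : ℝ) - 1)) * Rbar.mulVec (kpow (X (k + 1)) (m - 1)) i
        + (1 - α / ((m : ℝ) - 1)) * X k i) :
    (∀ k, norm1 (X k - x) ≤ ((1 - α / ((m : ℝ) - 1)) / (1 - α ^ 2)) ^ k * norm1 (X 0 - x)) ∧
    (1 - α / ((m : ℝ) - 1)) / (1 - α ^ 2) < 1 :=
  stmt10_general hm R hR v α hα0 hα x hx hxe Rbar hRbar X hXs hrec
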